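/- Let (X, E) be a connected non-oriented graph with bounded geometry (sup_x deg(x) < ∞) and let P be the simple random walk on X, i.e. p(x,y) = 1/deg(x) if (x,y) ∈ E and 0 otherwise. If the balls grow subexponentially at some vertex x, i.e. |B_n(x)|^{1/n} → 1 as n → ∞, then limsup_{n→∞} (p^{(n)}(x,x))^{1/n} = 1; equivalently, the convergence parameter satisfies R_P = 1, so the strong and weak survival critical parameters of the branching random walk on (X,P) coincide: λ_s = λ_w = 1. -/

import Mathlib

open Filter MeasureTheory ProbabilityTheory
open scoped ENNReal NNReal

/-- `n`-step weights (matrix powers) of a weight kernel `μ` on a countable set. -/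
noncomputable def matPow {X : Type*} [DecidableEq X] (μ : X → X → ℝ≥0∞) :
    ℕ → X → X → ℝ≥0∞
  | 0, x, y => if x = y then 1 else 0
  | n + 1, x, y => ∑' z, matPow μ n x z * μ z y

/-- `(X, μ)` has bounded row sums. -/
def bddRows {X : Type*} (μ : X → X → ℝ≥0∞) : Prop :=
  ∃ K : ℝ≥0∞, K ≠ ⊤ ∧ ∀ x, ∑' y, μ x y ≤ K

/-- `(X, μ)` is connected. -/
def connectedW {X : Type*} [DecidableEq X] (μ : X → X → ℝ≥0∞) : Prop :=
  ∀ x y, ∃ n, 0 < n ∧ 0 < matPow μ n x y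

/-- `limsup_n (μ^{(n)}(x,y))^{1/n}`, the reciprocal of the convergence parameter. -/
noncomputable def lsRoot {X : Type*} [DecidableEq X] (μ : X → X → ℝ≥0∞) (x y : X) : ℝ≥0∞ :=
  Filter.limsup (fun n : ℕ => matPow μ n x y ^ (n : ℝ)⁻¹) Filter.atTop

/-- The convergence parameter `R = 1 / limsup_n (μ^{(n)}(x,y))^{1/n}`. -/
noncomputable def convR {X : Type*} [DecidableEq X] (μ : X → X → ℝ≥0∞) (x y : X) : ℝ≥0∞ :=
  (lsRoot μ x y)⁻¹

open Classical in
/-- Restriction of a weight kernel to a subset (extended by `0`). -/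
noncomputable def restrictW {X : Type*} (μ : X → X → ℝ≥0∞) (A : Set X) : X → X → ℝ≥0∞ :=
  fun x y => if x ∈ A ∧ y ∈ A then μ x y else 0
open Classical in
/-- The simple random walk kernel of a graph: `p(x,y) = 1/deg(x)` if `x ∼ y`, else `0`. -/
noncomputable def srwKernel {X : Type*} (G : SimpleGraph X) : X → X → ℝ≥0∞ :=
  fun x y => if G.Adj x y then ((G.neighborSet x).ncard : ℝ≥0∞)⁻¹ else 0

/-! The walk is stochastic, so `pⁿ(x, x) ≤ 1`. Conversely `pⁿ(x, ·)` is a probability on the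
ball `Bₙ(x)`, so some `y` in it has `pⁿ(x, y) ≥ 1 / |Bₙ(x)|`, and reversibility
`deg x · pⁿ(x, y) = deg y · pⁿ(y, x)` gives `pⁿ(y, x) ≥ pⁿ(x, y) / D`. Hence
`p²ⁿ(x, x) ≥ pⁿ(x, y) pⁿ(y, x) ≥ 1 / (D |Bₙ(x)|²)`, whose `2n`-th root tends to `1` by
subexponential growth. -/

open Topology

section MatPow

variable {X : Type*} [DecidableEq X] (μ : X → X → ℝ≥0∞)

lemma matPow_one (x y : X) : matPow μ 1 x y = μ x y := by
  rw [matPow, tsum_eq_single x fun z hz => by simp [matPow, Ne.symm hz]]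
  simp [matPow]

lemma matPow_add (m n : ℕ) (x y : X) :
    matPow μ (m + n) x y = ∑' z, matPow μ m x z * matPow μ n z y := by
  induction n generalizing y with
  | zero =>
    rw [tsum_eq_single y fun z hz => by simp [matPow, hz]]
    simp [matPow]
  | succ n ih =>
    calc matPow μ (m + n + 1) x y
        = ∑' w, ∑' z, matPow μ m x z * (matPow μ n z w * μ w y) := by
          simp only [matPow, ih, ← ENNReal.tsum_mul_right, mul_assoc]
      _ = ∑' z, matPow μ m x z * matPow μ (n + 1) z y := by
          rw [ENNReal.tsum_comm]
          simp only [matPow, ENNReal.tsum_mul_left]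

lemma matPow_succ' (n : ℕ) (x y : X) :
    matPow μ (n + 1) x y = ∑' z, μ x z * matPow μ n z y := by
  simp only [add_comm n 1, matPow_add, matPow_one]

variable {μ}

lemma tsum_matPow_eq_one (hrow : ∀ z, ∑' y, μ z y = 1) (n : ℕ) (x : X) :
    ∑' y, matPow μ n x y = 1 := by
  induction n with
  | zero => simp [matPow]
  | succ n ih =>
    simp only [matPow]
    rw [ENNReal.tsum_comm]
    simp only [ENNReal.tsum_mul_left, hrow, mul_one, ih]

lemma matPow_le_one (hrow : ∀ z, ∑' y, μ z y = 1) (n : ℕ) (x y : X) : matPow μ n x y ≤ 1 :=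
  (ENNReal.le_tsum y).trans_eq (tsum_matPow_eq_one hrow n x)

lemma lsRoot_le_one (hrow : ∀ z, ∑' y, μ z y = 1) (x y : X) : lsRoot μ x y ≤ 1 :=
  limsup_le_of_le (by isBoundedDefault) <| .of_forall fun n =>
    ENNReal.rpow_le_one (matPow_le_one hrow n x y) (by positivity)

lemma matPow_reversible {π : X → ℝ≥0∞} (hrev : ∀ x y, π x * μ x y = π y * μ y x) (n : ℕ)
    (x y : X) : π x * matPow μ n x y = π y * matPow μ n y x := by
  induction n generalizing x y with
  | zero =>
    rcases eq_or_ne x y with rfl | h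
    · rfl
    · simp [matPow, h, Ne.symm h]
  | succ n ih =>
    rw [matPow, matPow_succ', ← ENNReal.tsum_mul_left, ← ENNReal.tsum_mul_left]
    refine tsum_congr fun z => ?_
    calc π x * (matPow μ n x z * μ z y) = π z * matPow μ n z x * μ z y := by
          rw [← mul_assoc, ih]
      _ = π y * (μ y z * matPow μ n z x) := by
          rw [mul_right_comm, hrev]; ring

lemma inv_mul_ncard_sq_le_matPow_two_mul (hrow : ∀ z, ∑' y, μ z y = 1) {n : ℕ} {x : X}
    {D : ℝ≥0∞} (hback : ∀ y, matPow μ n x y ≤ D * matPow μ n y x) {s : Set X} (hs : s.Finite)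
    (hsupp : ∀ y, matPow μ n x y ≠ 0 → y ∈ s) :
    (D * (s.ncard : ℝ≥0∞) ^ 2)⁻¹ ≤ matPow μ (2 * n) x x := by
  rw [Set.ncard_eq_toFinset_card s hs]
  set t := hs.toFinset
  have hsum : ∑ y ∈ t, matPow μ n x y = 1 := by
    refine (tsum_eq_sum fun y hy => ?_).symm.trans (tsum_matPow_eq_one hrow n x)
    by_contra h
    exact hy (hs.mem_toFinset.2 (hsupp y h))
  have hne : t.Nonempty := Finset.nonempty_of_sum_ne_zero (hsum ▸ one_ne_zero)
  have hcard : (t.card : ℝ≥0∞) ≠ 0 := by simpa using hne.ne_empty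
  obtain ⟨y, -, hy⟩ : ∃ y ∈ t, (t.card : ℝ≥0∞)⁻¹ ≤ matPow μ n x y := by
    refine ENNReal.exists_le_of_sum_le hne ?_
    rw [Finset.sum_const, nsmul_eq_mul, ENNReal.mul_inv_cancel hcard (by simp), hsum]
  calc (D * (t.card : ℝ≥0∞) ^ 2)⁻¹ = (t.card : ℝ≥0∞)⁻¹ * ((t.card : ℝ≥0∞)⁻¹ / D) := by
        rw [ENNReal.mul_inv (.inr (by simp)) (.inr (pow_ne_zero 2 hcard)), ENNReal.inv_pow,
          div_eq_mul_inv]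
        ring
    _ ≤ matPow μ n x y * (matPow μ n x y / D) := by gcongr
    _ ≤ matPow μ n x y * matPow μ n y x := by
        gcongr
        exact ENNReal.div_le_of_le_mul' (hback y)
    _ ≤ matPow μ (2 * n) x x := by
        rw [two_mul, matPow_add]
        exact ENNReal.le_tsum y

end MatPow

lemma tendsto_const_rpow_inv_natCast {c : ℝ} (hc : c ≠ 0) :
    Tendsto (fun n : ℕ => c ^ (n : ℝ)⁻¹) atTop (𝓝 1) := by
  have := (Real.continuousAt_const_rpow (b := 0) hc).tendsto.comp
    (tendsto_inv_atTop_zero.comp tendsto_natCast_atTop_atTop)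
  rwa [Real.rpow_zero] at this

lemma one_le_limsup_rpow_inv_of_inv_le {u : ℕ → ℝ≥0∞} {c : ℕ → ℕ}
    (hc : Tendsto (fun n => (c n : ℝ) ^ (n : ℝ)⁻¹) atTop (𝓝 1))
    (hu : ∀ᶠ n in atTop, (c n : ℝ≥0∞)⁻¹ ≤ u (2 * n)) :
    1 ≤ limsup (fun n => u n ^ (n : ℝ)⁻¹) atTop := by
  have hc' : Tendsto (fun n => (c n : ℝ≥0∞) ^ (n : ℝ)⁻¹) atTop (𝓝 1) := by
    have := ENNReal.tendsto_ofReal hc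
    rw [ENNReal.ofReal_one] at this
    refine this.congr fun n => ?_
    rw [← ENNReal.ofReal_rpow_of_nonneg (by positivity) (by positivity), ENNReal.ofReal_natCast]
  have hlim : Tendsto (fun n => ((c n : ℝ≥0∞) ^ (n : ℝ)⁻¹)⁻¹ ^ (2 : ℝ)⁻¹) atTop (𝓝 1) := by
    simpa using hc'.inv.ennrpow_const (2 : ℝ)⁻¹
  calc 1 = limsup (fun n => ((c n : ℝ≥0∞) ^ (n : ℝ)⁻¹)⁻¹ ^ (2 : ℝ)⁻¹) atTop :=
        hlim.limsup_eq.symm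
    _ ≤ limsup (fun n => u (2 * n) ^ ((2 * n : ℕ) : ℝ)⁻¹) atTop := by
        refine limsup_le_limsup (hu.mono fun n hn => ?_)
        dsimp only
        rw [← ENNReal.inv_rpow, ← ENNReal.rpow_mul, Nat.cast_mul, mul_inv, Nat.cast_two,
          mul_comm]
        gcongr
    _ ≤ limsup (fun n => u n ^ (n : ℝ)⁻¹) atTop :=
        Tendsto.limsup_comp_le_limsup (u := fun n => u n ^ (n : ℝ)⁻¹) (v := (2 * ·))
          (tendsto_id.const_mul_atTop' two_pos)

section SimpleRandomWalk

variable {X : Type*} (G : SimpleGraph X)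

lemma tsum_srwKernel_eq_one (z : X) (hfin : (G.neighborSet z).Finite)
    (hpos : 0 < (G.neighborSet z).ncard) : ∑' y, srwKernel G z y = 1 := by
  classical
  rw [tsum_eq_sum (s := hfin.toFinset) fun y hy => by simp_all [srwKernel],
    Finset.sum_congr rfl (g := fun _ => ((G.neighborSet z).ncard : ℝ≥0∞)⁻¹) fun y hy => by
      simp_all [srwKernel], Finset.sum_const,
    ← Set.ncard_eq_toFinset_card _ hfin, nsmul_eq_mul]
  exact ENNReal.mul_inv_cancel (by exact_mod_cast hpos.ne') (by simp)

lemma srwKernel_reversible (hdeg : ∀ z : X, 0 < (G.neighborSet z).ncard) (x y : X) :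
    ((G.neighborSet x).ncard : ℝ≥0∞) * srwKernel G x y
      = ((G.neighborSet y).ncard : ℝ≥0∞) * srwKernel G y x := by
  by_cases h : G.Adj x y
  · simp only [srwKernel, if_pos h, if_pos h.symm]
    rw [ENNReal.mul_inv_cancel (by exact_mod_cast (hdeg x).ne') (by simp),
      ENNReal.mul_inv_cancel (by exact_mod_cast (hdeg y).ne') (by simp)]
  · have h' : ¬G.Adj y x := fun h' => h h'.symm
    simp [srwKernel, h, h']

lemma exists_walk_length_of_matPow_srwKernel_ne_zero [DecidableEq X] {n : ℕ} {x y : X}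
    (h : matPow (srwKernel G) n x y ≠ 0) : ∃ p : G.Walk x y, p.length = n := by
  induction n generalizing y with
  | zero =>
    obtain rfl : x = y := by by_contra hxy; simp [matPow, hxy] at h
    exact ⟨.nil, rfl⟩
  | succ n ih =>
    obtain ⟨z, hz⟩ := not_forall.mp (mt ENNReal.tsum_eq_zero.mpr h)
    have hadj : G.Adj z y := by by_contra hzy; simp [srwKernel, hzy] at hz
    obtain ⟨p, hp⟩ := ih (left_ne_zero_of_mul hz)
    exact ⟨p.concat hadj, by rw [SimpleGraph.Walk.length_concat, hp]⟩

lemma dist_le_of_matPow_srwKernel_ne_zero [DecidableEq X] {n : ℕ} {x y : X}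
    (h : matPow (srwKernel G) n x y ≠ 0) : G.dist x y ≤ n := by
  obtain ⟨p, rfl⟩ := exists_walk_length_of_matPow_srwKernel_ne_zero G h
  exact SimpleGraph.dist_le p

lemma matPow_srwKernel_le_mul_matPow_symm [DecidableEq X] {D : ℕ}
    (hD : ∀ z, (G.neighborSet z).ncard ≤ D) (hdeg : ∀ z : X, 0 < (G.neighborSet z).ncard)
    (n : ℕ) (x y : X) :
    matPow (srwKernel G) n x y ≤ D * matPow (srwKernel G) n y x :=
  calc matPow (srwKernel G) n x y
      ≤ (G.neighborSet x).ncard * matPow (srwKernel G) n x y :=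
        le_mul_of_one_le_left' (by exact_mod_cast hdeg x)
    _ = (G.neighborSet y).ncard * matPow (srwKernel G) n y x :=
        matPow_reversible (srwKernel_reversible G hdeg) n x y
    _ ≤ D * matPow (srwKernel G) n y x := by gcongr; exact_mod_cast hD y

end SimpleRandomWalk

lemma eventually_ne_zero_of_tendsto_rpow_inv {b : ℕ → ℕ}
    (hb : Tendsto (fun n => (b n : ℝ) ^ (n : ℝ)⁻¹) atTop (𝓝 1)) :
    ∀ᶠ n in atTop, b n ≠ 0 := by
  filter_upwards [hb.eventually_ne one_ne_zero, eventually_ne_atTop 0] with n hn hn0 hb0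
  simp [hb0, hn0] at hn

theorem srw_subexponential_growth_lsRoot_eq_one_general
    {X : Type*} [DecidableEq X]
    (G : SimpleGraph X)
    (hbg : ∃ D : ℕ, ∀ z : X, (G.neighborSet z).Finite ∧ (G.neighborSet z).ncard ≤ D)
    (hdeg : ∀ z : X, 0 < (G.neighborSet z).ncard)
    (x : X)
    (hball : Tendsto
      (fun n : ℕ => (({y : X | G.dist x y ≤ n}.ncard : ℝ)) ^ (n : ℝ)⁻¹)
      atTop (nhds 1)) :
    lsRoot (srwKernel G) x x = 1 := by
  obtain ⟨D, hD⟩ := hbg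
  have hrow z := tsum_srwKernel_eq_one G z (hD z).1 (hdeg z)
  refine le_antisymm (lsRoot_le_one hrow x x) (one_le_limsup_rpow_inv_of_inv_le
    (c := fun n => D * {y : X | G.dist x y ≤ n}.ncard ^ 2) ?_ ?_)
  · have hD0 : (D : ℝ) ≠ 0 := by exact_mod_cast ((hdeg x).trans_le (hD x).2).ne'
    simpa using ((tendsto_const_rpow_inv_natCast hD0).mul (hball.pow 2)).congr fun n => by
      rw [Real.mul_rpow (by positivity) (by positivity), Real.rpow_pow_comm (by positivity)]
  · filter_upwards [eventually_ne_zero_of_tendsto_rpow_inv hball] with n hn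
    -- `ncard` of an infinite set is `0`, so the growth hypothesis forces finite balls.
    exact_mod_cast inv_mul_ncard_sq_le_matPow_two_mul hrow
      (matPow_srwKernel_le_mul_matPow_symm G (fun z => (hD z).2) hdeg n x)
      (Set.finite_of_ncard_ne_zero hn) fun y => dist_le_of_matPow_srwKernel_ne_zero G

/-- for the simple random walk on a connected non-oriented graph with
bounded geometry whose balls grow subexponentially at `x`, one has
`limsup_n (p^{(n)}(x,x))^{1/n} = 1`, i.e. `R_P = 1`, so `λ_s = λ_w = 1` for the
branching random walk. -/
theorem srw_subexponential_growth_lsRoot_eq_one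
    {X : Type*} [Countable X] [DecidableEq X]
    (G : SimpleGraph X) (hG : G.Connected)
    (hbg : ∃ D : ℕ, ∀ z : X, (G.neighborSet z).Finite ∧ (G.neighborSet z).ncard ≤ D)
    (hdeg : ∀ z : X, 0 < (G.neighborSet z).ncard)
    (x : X)
    (hball : Tendsto
      (fun n : ℕ => (({y : X | G.dist x y ≤ n}.ncard : ℝ)) ^ (n : ℝ)⁻¹)
      atTop (nhds 1)) :
    lsRoot (srwKernel G) x x = 1 :=
  srw_subexponential_growth_lsRoot_eq_one_general G hbg hdeg x hball
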